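/- Let f ∈ ℂ[x,y] be a homogeneous polynomial of degree d > 1. Then the following are equivalent: (i) for every g ∈ ℂ[x,y] and every k ≥ 1, if f^k·g ∈ D_f then g ∈ D_f (i.e. the Brieskorn module B(f) = ℂ[x,y]/D_f is torsion free over ℂ[t], where t acts by multiplication by f); (ii) the only common zero of f_x and f_y in ℂ² is the origin (i.e. f has an isolated singularity at 0). -/

import Mathlib

open MvPolynomial

/-!
Write `{f, g} = f_x g_y - f_y g_x`, so that `D_f` is the image of the derivation `{f, ·}`.

If the origin is the only common zero of `f_x` and `f_y`, the Nullstellensatz makes them coprime.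
As `D_f` is graded, it suffices to divide by `f` in a single degree `m`: if `f w = {f, h}`, Euler's
identity `x f_x + y f_y = d f` gives `f_y (-d h_x - y w) = f_x (x w - d h_y)`, so by coprimality
`x w - d h_y = f_y u` and `-d h_x - y w = f_x u`, and differentiating yields `(m + 2) w = -{f, u}`.

Conversely, let `f_x` and `f_y` vanish at `p ≠ 0`; then every element of `D_f` vanishes at `p`, and
so does `f` by Euler. Write `f = l ^ (n + 1) u` with `l` the linear form vanishing at `p` and
`l ∤ u`; by the Nullstellensatz `u(p) ≠ 0`. For an affine `m` with `{l, m} = 1` and `m(p) = 0`,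
`{f, l m u} = f g` where `g(p) = (n + 1) u(p) ≠ 0`.
-/

/-- Membership in `D_f = {f_x·∂g/∂y − f_y·∂g/∂x : g ∈ ℂ[x,y]}`. -/
def Dmem (f w : MvPolynomial (Fin 2) ℂ) : Prop :=
  ∃ g : MvPolynomial (Fin 2) ℂ,
    w = pderiv 0 f * pderiv 1 g - pderiv 1 f * pderiv 0 g

namespace MvPolynomial

section CommRing

variable {R σ : Type*} [CommRing R]

theorem pderiv_pderiv_comm (i j : σ) (φ : MvPolynomial σ R) :
    pderiv i (pderiv j φ) = pderiv j (pderiv i φ) := by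
  classical
  induction φ using MvPolynomial.induction_on with
  | C a => simp
  | add p q hp hq => simp [hp, hq]
  | mul_X p n hp =>
    simp only [pderiv_mul, pderiv_X, map_add, hp, Pi.single_apply]
    split_ifs <;> simp only [map_zero, Derivation.map_one_eq_zero] <;> ring

theorem IsHomogeneous.eval_smul {φ : MvPolynomial σ R} {n : ℕ} (hφ : φ.IsHomogeneous n)
    (c : R) (x : σ → R) : eval (c • x) φ = c ^ n * eval x φ := by
  conv_lhs => rw [φ.as_sum]
  conv_rhs => rw [φ.as_sum]
  simp only [map_sum, eval_monomial, Finset.mul_sum, Pi.smul_apply, smul_eq_mul, mul_pow,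
    Finsupp.prod_mul]
  refine Finset.sum_congr rfl fun s hs => ?_
  rw [Finsupp.prod, Finsupp.prod, Finset.prod_pow_eq_pow_sum,
    ← hφ.degree_eq_sum_deg_support hs]
  ring

attribute [local instance] MvPolynomial.gradedAlgebra in
theorem IsHomogeneous.homogeneousComponent_mul_left {φ : MvPolynomial σ R} {n : ℕ}
    (hφ : φ.IsHomogeneous n) (ψ : MvPolynomial σ R) (m : ℕ) :
    homogeneousComponent (n + m) (φ * ψ) = φ * homogeneousComponent m ψ := by
  simpa [← decomposition.decompose'_apply] using
    DirectSum.coe_decompose_mul_add_of_left_mem (𝒜 := homogeneousSubmodule σ R) (j := m)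
      (b := ψ) ((mem_homogeneousSubmodule _ _).2 hφ)

theorem IsHomogeneous.of_mul_left [IsDomain R] {φ ψ : MvPolynomial σ R} {n N : ℕ}
    (hφ : φ.IsHomogeneous n) (hφ0 : φ ≠ 0) (hφψ : (φ * ψ).IsHomogeneous N) :
    ψ.IsHomogeneous (N - n) := by
  intro s hs
  have hψs : homogeneousComponent s.degree ψ ≠ 0 := fun h => hs <| by
    simpa [coeff_homogeneousComponent] using congr(coeff s $h)
  have hcomp := hφ.homogeneousComponent_mul_left ψ s.degree
  rw [homogeneousComponent_of_mem ((mem_homogeneousSubmodule _ _).2 hφψ)] at hcomp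
  split_ifs at hcomp with h
  · rw [Pi.one_def, ← Finsupp.degree_eq_weight_one]
    omega
  · exact absurd hcomp.symm (mul_ne_zero hφ0 hψs)

theorem IsHomogeneous.X_zero_mul_pderiv_add_X_one_mul_pderiv {φ : MvPolynomial (Fin 2) R}
    {n : ℕ} (hφ : φ.IsHomogeneous n) :
    X 0 * pderiv 0 φ + X 1 * pderiv 1 φ = (n : MvPolynomial (Fin 2) R) * φ := by
  simpa [Fin.sum_univ_two, nsmul_eq_mul] using hφ.sum_X_mul_pderiv

theorem IsHomogeneous.not_isUnit [Nontrivial R] {φ : MvPolynomial σ R} {n : ℕ}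
    (hφ : φ.IsHomogeneous n) (hn : n ≠ 0) : ¬IsUnit φ := fun h => by
  have h0 : eval 0 φ = 0 := by simpa [zero_pow hn] using hφ.eval_smul 0 0
  exact not_isUnit_zero (h0 ▸ h.map (eval 0))

noncomputable def hamiltonian (f : MvPolynomial (Fin 2) R) :
    Derivation R (MvPolynomial (Fin 2) R) (MvPolynomial (Fin 2) R) :=
  pderiv 0 f • pderiv 1 - pderiv 1 f • pderiv 0

theorem hamiltonian_apply (f g : MvPolynomial (Fin 2) R) :
    hamiltonian f g = pderiv 0 f * pderiv 1 g - pderiv 1 f * pderiv 0 g := rfl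

noncomputable def hamiltonianRange (f : MvPolynomial (Fin 2) R) :
    Submodule R (MvPolynomial (Fin 2) R) :=
  LinearMap.range (hamiltonian f).toLinearMap

theorem mem_hamiltonianRange {f w : MvPolynomial (Fin 2) R} :
    w ∈ hamiltonianRange f ↔ ∃ g, hamiltonian f g = w :=
  LinearMap.mem_range

theorem hamiltonian_mem_hamiltonianRange (f g : MvPolynomial (Fin 2) R) :
    hamiltonian f g ∈ hamiltonianRange f :=
  mem_hamiltonianRange.2 ⟨g, rfl⟩

theorem eval_eq_zero_of_mem_hamiltonianRange {f w : MvPolynomial (Fin 2) R} {p : Fin 2 → R}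
    (h0 : eval p (pderiv 0 f) = 0) (h1 : eval p (pderiv 1 f) = 0) (hw : w ∈ hamiltonianRange f) :
    eval p w = 0 := by
  obtain ⟨g, rfl⟩ := mem_hamiltonianRange.1 hw
  simp [hamiltonian_apply, h0, h1]

theorem hamiltonian_pow_mul (l m u : MvPolynomial (Fin 2) R) (n : ℕ) :
    hamiltonian (l ^ (n + 1) * u) (l * m * u) = l ^ (n + 1) * u *
      ((n + 1) * u * hamiltonian l m + n * m * hamiltonian l u + l * hamiltonian u m) := by
  simp only [hamiltonian_apply, Derivation.leibniz, Derivation.leibniz_pow, smul_eq_mul,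
    nsmul_eq_mul, Nat.add_sub_cancel]
  push_cast
  ring

theorem IsHomogeneous.homogeneousComponent_mem_hamiltonianRange {f : MvPolynomial (Fin 2) R}
    {d : ℕ} (hf : f.IsHomogeneous d) {w : MvPolynomial (Fin 2) R} (hw : w ∈ hamiltonianRange f)
    (k : ℕ) : homogeneousComponent k w ∈ hamiltonianRange f := by
  obtain ⟨h, rfl⟩ := mem_hamiltonianRange.1 hw
  rw [← sum_homogeneousComponent h, map_sum, map_sum]
  refine Submodule.sum_mem _ fun e _ => ?_
  have hdeg : (hamiltonian f (homogeneousComponent e h)).IsHomogeneous (d - 1 + (e - 1)) := by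
    have he := homogeneousComponent_isHomogeneous e h
    exact (hf.pderiv.mul he.pderiv).sub (hf.pderiv.mul he.pderiv)
  rw [homogeneousComponent_of_mem ((mem_homogeneousSubmodule _ _).2 hdeg)]
  split_ifs
  · exact hamiltonian_mem_hamiltonianRange _ _
  · exact zero_mem _

end CommRing

section Field

variable {K : Type*} [Field K]

noncomputable def lineForm (p : Fin 2 → K) : MvPolynomial (Fin 2) K :=
  C (p 1) * X 0 - C (p 0) * X 1

theorem isHomogeneous_lineForm (p : Fin 2 → K) : (lineForm p).IsHomogeneous 1 :=
  (isHomogeneous_C_mul_X _ 0).sub (isHomogeneous_C_mul_X _ 1)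

theorem eval_lineForm (p x : Fin 2 → K) : eval x (lineForm p) = p 1 * x 0 - p 0 * x 1 := by
  simp [lineForm]

theorem eval_lineForm_self (p : Fin 2 → K) : eval p (lineForm p) = 0 := by
  rw [eval_lineForm, mul_comm, sub_self]

theorem exists_eq_smul_of_eval_lineForm_eq_zero {p x : Fin 2 → K} (hp : p ≠ 0)
    (hx : eval x (lineForm p) = 0) : ∃ c : K, x = c • p := by
  rw [eval_lineForm] at hx
  obtain hp0 | hp1 : p 0 ≠ 0 ∨ p 1 ≠ 0 := by simpa using Function.ne_iff.1 hp
  · refine ⟨x 0 / p 0, ?_⟩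
    ext i; fin_cases i
    · simp [hp0]
    · simp only [Fin.mk_one, Pi.smul_apply, smul_eq_mul]
      field_simp
      linear_combination -hx
  · refine ⟨x 1 / p 1, ?_⟩
    ext i; fin_cases i
    · simp only [Fin.zero_eta, Pi.smul_apply, smul_eq_mul]
      field_simp
      linear_combination hx
    · simp [hp1]

theorem hamiltonian_lineForm (p : Fin 2 → K) (g : MvPolynomial (Fin 2) K) :
    hamiltonian (lineForm p) g = C (p 0) * pderiv 0 g + C (p 1) * pderiv 1 g := by
  simp only [hamiltonian_apply, lineForm, map_sub, Derivation.leibniz, derivation_C, smul_eq_mul,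
    pderiv_X_self, pderiv_X_of_ne one_ne_zero, pderiv_X_of_ne zero_ne_one]
  ring

theorem exists_hamiltonian_lineForm_eq_one {p : Fin 2 → K} (hp : p ≠ 0) :
    ∃ m, hamiltonian (lineForm p) m = 1 ∧ eval p m = 0 := by
  obtain ⟨v, hv⟩ : ∃ v : Fin 2 → K, p 0 * v 0 + p 1 * v 1 = 1 := by
    obtain hp0 | hp1 : p 0 ≠ 0 ∨ p 1 ≠ 0 := by simpa using Function.ne_iff.1 hp
    · exact ⟨![(p 0)⁻¹, 0], by simp [hp0]⟩
    · exact ⟨![0, (p 1)⁻¹], by simp [hp1]⟩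
  refine ⟨C (v 0) * X 0 + C (v 1) * X 1 - 1, ?_, by simp [mul_comm, hv]⟩
  simpa [hamiltonian_lineForm, pderiv_X] using congr(C $hv)

theorem lineForm_prime {p : Fin 2 → K} (hp : p ≠ 0) : Prime (lineForm p) := by
  have h0 : coeff (Finsupp.single 0 1) (lineForm p) = p 1 := by
    simp [lineForm, coeff_X, Finsupp.single_eq_single_iff]
  have h1 : coeff (Finsupp.single 1 1) (lineForm p) = -p 0 := by
    simp [lineForm, coeff_X, Finsupp.single_eq_single_iff]
  have hp' (hp0 : p 0 = 0) (hp1 : p 1 = 0) : False := hp <| by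
    ext i; fin_cases i <;> simp [hp0, hp1]
  have hne : lineForm p ≠ 0 := fun h => by
    rw [h, coeff_zero] at h0 h1
    exact hp' (neg_eq_zero.1 h1.symm) h0.symm
  refine (irreducible_of_totalDegree_eq_one ((isHomogeneous_lineForm p).totalDegree hne)
    fun c hc => isUnit_iff_ne_zero.2 ?_).prime
  rintro rfl
  have hc0 := zero_dvd_iff.1 (hc (Finsupp.single 0 1))
  have hc1 := zero_dvd_iff.1 (hc (Finsupp.single 1 1))
  exact hp' (neg_eq_zero.1 (h1 ▸ hc1)) (h0 ▸ hc0)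

variable [CharZero K]

theorem IsHomogeneous.mem_hamiltonianRange_of_mul_mem {f w : MvPolynomial (Fin 2) K} {d m : ℕ}
    (hf : f.IsHomogeneous d) (hfy : pderiv 1 f ≠ 0)
    (hrel : IsRelPrime (pderiv 1 f) (pderiv 0 f)) (hw : w.IsHomogeneous m)
    (hfw : f * w ∈ hamiltonianRange f) : w ∈ hamiltonianRange f := by
  obtain ⟨h, heq⟩ := mem_hamiltonianRange.1 hfw
  rw [hamiltonian_apply] at heq
  have eulf := hf.X_zero_mul_pderiv_add_X_one_mul_pderiv
  have eulw := hw.X_zero_mul_pderiv_add_X_one_mul_pderiv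
  have key : pderiv 1 f * (-(d : MvPolynomial (Fin 2) K) * pderiv 0 h - X 1 * w) =
      pderiv 0 f * (X 0 * w - (d : MvPolynomial (Fin 2) K) * pderiv 1 h) := by
    linear_combination -w * eulf + d * heq
  obtain ⟨u, hu⟩ := hrel.dvd_of_dvd_mul_left ⟨_, key.symm⟩
  have hu' : -(d : MvPolynomial (Fin 2) K) * pderiv 0 h - X 1 * w = pderiv 0 f * u :=
    mul_left_cancel₀ hfy (by rw [key, hu]; ring)
  have e0 := congr(pderiv 0 $hu)
  have e1 := congr(pderiv 1 $hu')
  simp only [map_sub, map_neg, Derivation.leibniz, smul_eq_mul, Derivation.map_natCast,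
    pderiv_X_self] at e0 e1
  have hfin : ((m + 2 : ℕ) : MvPolynomial (Fin 2) K) * w = -hamiltonian f u := by
    rw [hamiltonian_apply]
    push_cast
    linear_combination
      e0 - e1 - eulw + d * pderiv_pderiv_comm 0 1 h + u * pderiv_pderiv_comm 0 1 f
  have hm2 : ((m + 2 : ℕ) : K) ≠ 0 := Nat.cast_ne_zero.2 (by omega)
  refine mem_hamiltonianRange.2 ⟨-(((m + 2 : ℕ) : K)⁻¹ • u), ?_⟩
  rw [map_neg, Derivation.map_smul, ← smul_neg, ← hfin, smul_eq_C_mul, ← mul_assoc,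
    ← map_natCast C, ← map_mul, inv_mul_cancel₀ hm2, map_one, one_mul]

theorem IsHomogeneous.mem_hamiltonianRange_of_pow_mul_mem {f : MvPolynomial (Fin 2) K} {d : ℕ}
    (hf : f.IsHomogeneous d) (hfy : pderiv 1 f ≠ 0)
    (hrel : IsRelPrime (pderiv 1 f) (pderiv 0 f)) {g : MvPolynomial (Fin 2) K} (k : ℕ)
    (hfg : f ^ k * g ∈ hamiltonianRange f) : g ∈ hamiltonianRange f := by
  induction k generalizing g with
  | zero => simpa using hfg
  | succ k ih =>
    have hfg' : f * g ∈ hamiltonianRange f := ih (by rwa [← mul_assoc, ← pow_succ])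
    rw [← sum_homogeneousComponent g]
    refine Submodule.sum_mem _ fun m _ => ?_
    refine hf.mem_hamiltonianRange_of_mul_mem hfy hrel (homogeneousComponent_isHomogeneous m g) ?_
    rw [← hf.homogeneousComponent_mul_left]
    exact hf.homogeneousComponent_mem_hamiltonianRange hfg' _

end Field

section IsAlgClosed

variable {K : Type*} [Field K] [IsAlgClosed K]

theorem exists_dvd_pow_of_forall_eval_eq_zero {σ : Type*} [Finite σ] {q r : MvPolynomial σ K}
    (h : ∀ x, eval x q = 0 → eval x r = 0) : ∃ k : ℕ, q ∣ r ^ k := by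
  have hr : r ∈ vanishingIdeal K (zeroLocus K (Ideal.span {q})) := by
    simp only [mem_vanishingIdeal_iff, mem_zeroLocus_iff, Ideal.mem_span_singleton]
    exact fun x hx => h x (hx q dvd_rfl)
  rw [vanishingIdeal_zeroLocus_eq_radical] at hr
  obtain ⟨k, hk⟩ := hr
  exact ⟨k, Ideal.mem_span_singleton.1 hk⟩

theorem isUnit_of_forall_eval_eq_zero {q : MvPolynomial (Fin 2) K}
    (h : ∀ p, eval p q = 0 → p = 0) : IsUnit q := by
  have hX (i : Fin 2) : ∃ k : ℕ, q ∣ X i ^ k :=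
    exists_dvd_pow_of_forall_eval_eq_zero fun x hx => by simp [h x hx]
  obtain ⟨a, ha⟩ := hX 0
  obtain ⟨b, hb⟩ := hX 1
  have hX01 : IsRelPrime (X 0 : MvPolynomial (Fin 2) K) (X 1) :=
    X_prime.irreducible.isRelPrime_iff_not_dvd.2 (by simp)
  exact hX01.pow ha hb

theorem isRelPrime_of_forall_eval_eq_zero {a b : MvPolynomial (Fin 2) K}
    (h : ∀ p, eval p a = 0 → eval p b = 0 → p = 0) : IsRelPrime a b := by
  rintro q ⟨a', rfl⟩ ⟨b', rfl⟩
  exact isUnit_of_forall_eval_eq_zero fun p hp => h p (by simp [hp]) (by simp [hp])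

theorem IsHomogeneous.lineForm_dvd {u : MvPolynomial (Fin 2) K} {e : ℕ} (hu : u.IsHomogeneous e)
    {p : Fin 2 → K} (hp : p ≠ 0) (hup : eval p u = 0) : lineForm p ∣ u := by
  obtain ⟨k, hk⟩ := exists_dvd_pow_of_forall_eval_eq_zero (q := lineForm p) fun x hx => by
    obtain ⟨c, rfl⟩ := exists_eq_smul_of_eval_lineForm_eq_zero hp hx
    rw [hu.eval_smul, hup, mul_zero]
  exact (lineForm_prime hp).dvd_of_dvd_pow hk

theorem IsHomogeneous.exists_eq_lineForm_pow_mul {f : MvPolynomial (Fin 2) K} {d : ℕ}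
    (hf : f.IsHomogeneous d) (hf0 : f ≠ 0) {p : Fin 2 → K} (hp : p ≠ 0) (hfp : eval p f = 0) :
    ∃ (n : ℕ) (u : MvPolynomial (Fin 2) K), f = lineForm p ^ (n + 1) * u ∧ eval p u ≠ 0 := by
  have hl := lineForm_prime hp
  obtain ⟨n, u, hlu, rfl⟩ := WfDvdMonoid.max_power_factor' hf0 hl.not_isUnit
  obtain ⟨n, rfl⟩ : ∃ k, n = k + 1 := Nat.exists_eq_add_one.2 <| Nat.pos_of_ne_zero <| by
    rintro rfl
    exact hlu (by simpa using hf.lineForm_dvd hp hfp)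
  have hu := ((isHomogeneous_lineForm p).pow (n + 1)).of_mul_left (pow_ne_zero _ hl.ne_zero) hf
  exact ⟨n, u, rfl, fun h => hlu (hu.lineForm_dvd hp h)⟩

theorem IsHomogeneous.exists_mul_mem_hamiltonianRange_and_notMem [CharZero K]
    {f : MvPolynomial (Fin 2) K} {d : ℕ} (hf : f.IsHomogeneous d) (hd : d ≠ 0) {p : Fin 2 → K}
    (hp : p ≠ 0) (h0 : eval p (pderiv 0 f) = 0) (h1 : eval p (pderiv 1 f) = 0) :
    ∃ g, f * g ∈ hamiltonianRange f ∧ g ∉ hamiltonianRange f := by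
  have hnot (g : MvPolynomial (Fin 2) K) (hg : eval p g ≠ 0) : g ∉ hamiltonianRange f :=
    fun hmem => hg (eval_eq_zero_of_mem_hamiltonianRange h0 h1 hmem)
  rcases eq_or_ne f 0 with rfl | hf0
  · exact ⟨1, by simp [zero_mem], hnot 1 (by simp)⟩
  have hfp : eval p f = 0 := by
    have h := congr(eval p $hf.X_zero_mul_pderiv_add_X_one_mul_pderiv)
    simpa [h0, h1, hd] using h.symm
  obtain ⟨n, u, rfl, hup⟩ := hf.exists_eq_lineForm_pow_mul hf0 hp hfp
  obtain ⟨m, hlm, hmp⟩ := exists_hamiltonian_lineForm_eq_one hp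
  refine ⟨(n + 1) * u + n * m * hamiltonian (lineForm p) u + lineForm p * hamiltonian u m,
    mem_hamiltonianRange.2 ⟨lineForm p * m * u, by rw [hamiltonian_pow_mul, hlm, mul_one]⟩, hnot _ ?_⟩
  simpa [hmp, eval_lineForm_self] using ⟨Nat.cast_add_one_ne_zero n, hup⟩

end IsAlgClosed
end MvPolynomial

theorem dmem_iff_mem_hamiltonianRange {f w : MvPolynomial (Fin 2) ℂ} :
    Dmem f w ↔ w ∈ hamiltonianRange f := by
  simp only [Dmem, mem_hamiltonianRange, hamiltonian_apply, eq_comm]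

theorem statement5 (f : MvPolynomial (Fin 2) ℂ) (d : ℕ) (hd : 1 < d)
    (hf : f.IsHomogeneous d) :
    (∀ (g : MvPolynomial (Fin 2) ℂ) (k : ℕ), 1 ≤ k → Dmem f (f ^ k * g) → Dmem f g) ↔
      (∀ p : Fin 2 → ℂ, eval p (pderiv 0 f) = 0 → eval p (pderiv 1 f) = 0 → p = 0) := by
  simp only [dmem_iff_mem_hamiltonianRange]
  constructor
  · intro htf p h0 h1
    by_contra hp
    obtain ⟨g, hfg, hg⟩ := hf.exists_mul_mem_hamiltonianRange_and_notMem (by omega) hp h0 h1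
    exact hg (htf g 1 le_rfl (by rwa [pow_one]))
  · intro hiso g k _ hfg
    have hrel : IsRelPrime (pderiv 1 f) (pderiv 0 f) :=
      isRelPrime_of_forall_eval_eq_zero fun p h1 h0 => hiso p h0 h1
    have hfy : pderiv 1 f ≠ 0 := fun h =>
      hf.pderiv.not_isUnit (by omega) (isRelPrime_zero_left.1 (h ▸ hrel))
    exact hf.mem_hamiltonianRange_of_pow_mul_mem hfy hrel k hfg
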